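/- arXiv:2302.13511 — 5 statements merged into one kernel-verified Lean document; each statement's English description precedes it below -/
import Mathlib

section
/- Let P be a probability measure on a measurable space Ω, let g : Ω → ℝ be measurable, let M ≥ 2, and let f_1, …, f_M : Ω → ℝ be measurable functions such that g − f_ℓ is square-integrable with respect to P for every ℓ. Define the ensemble risk R_M = ∫ (g − (1/M) Σ_{ℓ=1}^M f_ℓ)² dP, the average 1-ensemble risk a_1 = (1/M) Σ_{ℓ=1}^M ∫ (g − f_ℓ)² dP, and the average 2-ensemble risk a_2 = (1/(M(M−1))) Σ_{i≠j, i,j∈[M]} ∫ (g − (f_i + f_j)/2)² dP. Then R_M = −(1 − 2/M) a_1 + 2(1 − 1/M) a_2. -/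
/-!
The identity holds pointwise, before integrating. For residuals `x ℓ = g - f ℓ` with
`S = ∑ x ℓ ^ 2` and `T = ∑ x ℓ`, the pair sum `∑_{i ≠ j} ((x i + x j) / 2) ^ 2` equals
`((M - 2) * S + T ^ 2) / 2`, so the right-hand combination collapses to `(T / M) ^ 2`, the
squared mean residual. Square-integrability of the residuals makes every term integrable,
and linearity of the integral finishes the proof.
-/

open Finset MeasureTheory

section Pointwise

variable {ι : Type*} [Fintype ι] [DecidableEq ι]

theorem sum_sum_ne_sq_add_div_two (x : ι → ℝ) :
    ∑ i, ∑ j ∈ univ.filter (fun j => j ≠ i), ((x i + x j) / 2) ^ 2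
      = ((Fintype.card ι - 2) * ∑ i, x i ^ 2 + (∑ i, x i) ^ 2) / 2 := by
  have hrow : ∀ i, ∑ j ∈ univ.filter (fun j => j ≠ i), ((x i + x j) / 2) ^ 2
      = (Fintype.card ι * x i ^ 2 + 2 * x i * ∑ j, x j + ∑ j, x j ^ 2) / 4 - x i ^ 2 := by
    intro i
    rw [filter_ne', sum_erase_eq_sub (mem_univ i)]
    simp only [div_pow, add_sq, ← sum_div, sum_add_distrib, ← mul_sum, sum_const, card_univ,
      nsmul_eq_mul]
    ring
  simp only [hrow, sum_sub_distrib, ← sum_div, sum_add_distrib, ← mul_sum, ← sum_mul, sum_const,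
    card_univ, nsmul_eq_mul]
  ring

theorem sq_average_eq (hι : 2 ≤ Fintype.card ι) (x : ι → ℝ) :
    ((1 / (Fintype.card ι : ℝ)) * ∑ i, x i) ^ 2
      = -(1 - 2 / (Fintype.card ι : ℝ)) * ((1 / (Fintype.card ι : ℝ)) * ∑ i, x i ^ 2)
        + 2 * (1 - 1 / (Fintype.card ι : ℝ)) *
          ((1 / ((Fintype.card ι : ℝ) * ((Fintype.card ι : ℝ) - 1))) *
            ∑ i, ∑ j ∈ univ.filter (fun j => j ≠ i), ((x i + x j) / 2) ^ 2) := by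
  have hn : (2 : ℝ) ≤ Fintype.card ι := by exact_mod_cast hι
  have hn1 : (Fintype.card ι : ℝ) - 1 ≠ 0 := by linarith
  rw [sum_sum_ne_sq_add_div_two]
  field_simp
  ring

theorem sq_sub_average_eq (hι : 2 ≤ Fintype.card ι) (y : ℝ) (x : ι → ℝ) :
    (y - (1 / (Fintype.card ι : ℝ)) * ∑ i, x i) ^ 2
      = -(1 - 2 / (Fintype.card ι : ℝ)) * ((1 / (Fintype.card ι : ℝ)) * ∑ i, (y - x i) ^ 2)
        + 2 * (1 - 1 / (Fintype.card ι : ℝ)) *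
          ((1 / ((Fintype.card ι : ℝ) * ((Fintype.card ι : ℝ) - 1))) *
            ∑ i, ∑ j ∈ univ.filter (fun j => j ≠ i), (y - (x i + x j) / 2) ^ 2) := by
  have hn : (Fintype.card ι : ℝ) ≠ 0 := by positivity
  have hmean : y - (1 / (Fintype.card ι : ℝ)) * ∑ i, x i
      = (1 / (Fintype.card ι : ℝ)) * ∑ i, (y - x i) := by
    rw [sum_sub_distrib, sum_const, card_univ, nsmul_eq_mul]
    field_simp
  have hmid : ∀ i j, y - (x i + x j) / 2 = ((y - x i) + (y - x j)) / 2 := fun i j => by ring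
  simp only [hmean, hmid]
  exact sq_average_eq hι (fun i => y - x i)

end Pointwise

theorem integrable_sq_sub_midpoint {Ω : Type*} [MeasurableSpace Ω] {P : Measure Ω}
    {g f₁ f₂ : Ω → ℝ} (h₁ : MemLp (fun ω => g ω - f₁ ω) 2 P)
    (h₂ : MemLp (fun ω => g ω - f₂ ω) 2 P) :
    Integrable (fun ω => (g ω - (f₁ ω + f₂ ω) / 2) ^ 2) P := by
  have hmid : MemLp (fun ω => g ω - (f₁ ω + f₂ ω) / 2) 2 P := by
    convert (h₁.add h₂).const_mul (1 / 2 : ℝ) using 2 with ω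
    simp only [Pi.add_apply]
    ring
  exact hmid.integrable_sq

theorem ensemble_risk_decomposition_general
    {Ω : Type*} [MeasurableSpace Ω] (P : Measure Ω)
    (g : Ω → ℝ)
    (M : ℕ) (hM : 2 ≤ M)
    (f : Fin M → Ω → ℝ)
    (hL2 : ∀ ℓ, MemLp (fun ω => g ω - f ℓ ω) 2 P) :
    ∫ ω, (g ω - (1 / (M : ℝ)) * ∑ ℓ, f ℓ ω) ^ 2 ∂P
      = -(1 - 2 / (M : ℝ)) *
          ((1 / (M : ℝ)) * ∑ ℓ, ∫ ω, (g ω - f ℓ ω) ^ 2 ∂P)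
        + 2 * (1 - 1 / (M : ℝ)) *
          ((1 / ((M : ℝ) * ((M : ℝ) - 1))) *
            ∑ i, ∑ j ∈ Finset.univ.filter (fun j => j ≠ i),
              ∫ ω, (g ω - (f i ω + f j ω) / 2) ^ 2 ∂P) := by
  have hsingle : ∀ ℓ, Integrable (fun ω => (g ω - f ℓ ω) ^ 2) P :=
    fun ℓ => (hL2 ℓ).integrable_sq
  have hpair : ∀ i j, Integrable (fun ω => (g ω - (f i ω + f j ω) / 2) ^ 2) P :=
    fun i j => integrable_sq_sub_midpoint (hL2 i) (hL2 j)
  have hpoint := fun ω =>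
    sq_sub_average_eq (by rwa [Fintype.card_fin]) (g ω) (fun ℓ => f ℓ ω)
  simp only [Fintype.card_fin] at hpoint
  simp only [hpoint]
  rw [integral_add, integral_const_mul, integral_const_mul, integral_const_mul,
    integral_const_mul, integral_finsetSum _ fun ℓ _ => hsingle ℓ,
    integral_finsetSum _ fun i _ => integrable_finsetSum _ fun j _ => hpair i j]
  · simp only [integral_finsetSum _ fun j _ => hpair _ j]
  · exact ((integrable_finsetSum _ fun ℓ _ => hsingle ℓ).const_mul _).const_mul _
  · exact ((integrable_finsetSum _ fun i _ =>
      integrable_finsetSum _ fun j _ => hpair i j).const_mul _).const_mul _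

/-- Squared conditional risk decomposition: the risk of the `M`-ensemble is a linear
combination of the average `1`-ensemble risk and the average `2`-ensemble risk. -/
theorem ensemble_risk_decomposition
    {Ω : Type*} [MeasurableSpace Ω] (P : Measure Ω) [IsProbabilityMeasure P]
    (g : Ω → ℝ) (hg : Measurable g)
    (M : ℕ) (hM : 2 ≤ M)
    (f : Fin M → Ω → ℝ) (hf : ∀ ℓ, Measurable (f ℓ))
    (hL2 : ∀ ℓ, MemLp (fun ω => g ω - f ℓ ω) 2 P) :
    ∫ ω, (g ω - (1 / (M : ℝ)) * ∑ ℓ, f ℓ ω) ^ 2 ∂P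
      = -(1 - 2 / (M : ℝ)) *
          ((1 / (M : ℝ)) * ∑ ℓ, ∫ ω, (g ω - f ℓ ω) ^ 2 ∂P)
        + 2 * (1 - 1 / (M : ℝ)) *
          ((1 / ((M : ℝ) * ((M : ℝ) - 1))) *
            ∑ i, ∑ j ∈ Finset.univ.filter (fun j => j ≠ i),
              ∫ ω, (g ω - (f i ω + f j ω) / 2) ^ 2 ∂P) :=
  ensemble_risk_decomposition_general P g M hM f hL2
end

section
/- Let P be a probability measure on a measurable space Ω, let g : Ω → ℝ be measurable, let M ≥ 2, and let f_1, …, f_M : Ω → ℝ be measurable functions such that g − f_ℓ is square-integrable with respect to P for every ℓ. Define R_M = ∫ (g − (1/M) Σ_{ℓ=1}^M f_ℓ)² dP, a_1 = (1/M) Σ_{ℓ=1}^M ∫ (g − f_ℓ)² dP, and a_2 = (1/(M(M−1))) Σ_{i≠j} ∫ (g − (f_i + f_j)/2)² dP. Then a_2 ≤ a_1, and consequently 2 a_2 − a_1 ≤ R_M ≤ a_1. -/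
open Finset MeasureTheory

/-! With `h ℓ = g - f ℓ`, all three risks are expressed through `A = ∑ ℓ, ∫ (h ℓ)²` and
`S = ∫ (∑ ℓ, h ℓ)²`: `a₁ = A / M`, `R_M = S / M²`, and expanding the squares of the pairwise
averages gives `M (M - 1) a₂ = ((M - 2) A + S) / 2`. Each of the three inequalities is then
equivalent to `S ≤ M A`, the pointwise Cauchy–Schwarz inequality `(∑ h ℓ)² ≤ M ∑ (h ℓ)²`
integrated. -/

theorem sum_sum_ne_sq_half_add {ι : Type*} [Fintype ι] [DecidableEq ι] (x : ι → ℝ) :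
    ∑ i, ∑ j ∈ univ.filter (fun j => j ≠ i), ((x i + x j) / 2) ^ 2
      = ((Fintype.card ι - 2) * ∑ i, x i ^ 2 + (∑ i, x i) ^ 2) / 2 := by
  have hexpand : ∀ i j, ((x i + x j) / 2) ^ 2 = (x i ^ 2 + x j ^ 2) / 4 + x i * x j / 2 :=
    fun i j => by ring
  simp only [filter_ne', sum_erase_eq_sub (mem_univ _), sum_sub_distrib, hexpand,
    sum_add_distrib, ← sum_div, sum_const, card_univ, nsmul_eq_mul, ← mul_sum, ← sum_mul, ← sq]
  ring

section L2

variable {Ω ι : Type*} [MeasurableSpace Ω] {μ : Measure Ω} [Fintype ι] {h : ι → Ω → ℝ}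

theorem integral_sq_sum_le_card_mul_sum_integral_sq (hh : ∀ i, MemLp (h i) 2 μ) :
    ∫ ω, (∑ i, h i ω) ^ 2 ∂μ ≤ Fintype.card ι * ∑ i, ∫ ω, h i ω ^ 2 ∂μ := by
  rw [← integral_finsetSum _ fun i _ => (hh i).integrable_sq, ← integral_const_mul]
  refine integral_mono (memLp_finsetSum _ fun i _ => hh i).integrable_sq
    ((integrable_finsetSum _ fun i _ => (hh i).integrable_sq).const_mul _) fun ω => ?_
  simpa using sq_sum_le_card_mul_sum_sq (s := univ) (f := fun i => h i ω)

theorem sum_sum_ne_integral_sq_half_add [DecidableEq ι] (hh : ∀ i, MemLp (h i) 2 μ) :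
    ∑ i, ∑ j ∈ univ.filter (fun j => j ≠ i), ∫ ω, ((h i ω + h j ω) / 2) ^ 2 ∂μ
      = ((Fintype.card ι - 2) * ∑ i, ∫ ω, h i ω ^ 2 ∂μ + ∫ ω, (∑ i, h i ω) ^ 2 ∂μ) / 2 := by
  have hpair : ∀ i j, Integrable (fun ω => ((h i ω + h j ω) / 2) ^ 2) μ := fun i j => by
    simpa [div_eq_mul_inv] using (((hh i).add (hh j)).mul_const 2⁻¹).integrable_sq
  have hsq := fun i => (hh i).integrable_sq
  rw [← integral_finsetSum _ fun i _ => hsq i, ← integral_const_mul, ← integral_add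
    ((integrable_finsetSum _ fun i _ => hsq i).const_mul _)
    (memLp_finsetSum _ fun i _ => hh i).integrable_sq, ← integral_div]
  simp_rw [← sum_sum_ne_sq_half_add]
  rw [integral_finsetSum _ fun i _ => integrable_finsetSum _ fun j _ => hpair i j]
  exact sum_congr rfl fun i _ => (integral_finsetSum _ fun j _ => hpair i j).symm

end L2

theorem ensemble_sandwich_of_le_mul {M A S : ℝ} (hM : 2 ≤ M) (hSA : S ≤ M * A) :
    1 / (M * (M - 1)) * (((M - 2) * A + S) / 2) ≤ 1 / M * A
    ∧ 2 * (1 / (M * (M - 1)) * (((M - 2) * A + S) / 2)) - 1 / M * A ≤ S / M ^ 2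
    ∧ S / M ^ 2 ≤ 1 / M * A := by
  have hM0 : 0 < M := by linarith
  have hM1 : 0 < M - 1 := by linarith
  refine ⟨?_, ?_, ?_⟩ <;> rw [← sub_nonneg] <;> field_simp <;> nlinarith

theorem ensemble_risk_sandwich_general
    {Ω : Type*} [MeasurableSpace Ω] (P : Measure Ω)
    (g : Ω → ℝ)
    (M : ℕ) (hM : 2 ≤ M)
    (f : Fin M → Ω → ℝ)
    (hL2 : ∀ ℓ, MemLp (fun ω => g ω - f ℓ ω) 2 P) :
    ((1 / ((M : ℝ) * ((M : ℝ) - 1))) *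
        ∑ i, ∑ j ∈ Finset.univ.filter (fun j => j ≠ i),
          ∫ ω, (g ω - (f i ω + f j ω) / 2) ^ 2 ∂P)
      ≤ (1 / (M : ℝ)) * ∑ ℓ, ∫ ω, (g ω - f ℓ ω) ^ 2 ∂P
    ∧ 2 * ((1 / ((M : ℝ) * ((M : ℝ) - 1))) *
            ∑ i, ∑ j ∈ Finset.univ.filter (fun j => j ≠ i),
              ∫ ω, (g ω - (f i ω + f j ω) / 2) ^ 2 ∂P)
        - (1 / (M : ℝ)) * ∑ ℓ, ∫ ω, (g ω - f ℓ ω) ^ 2 ∂P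
      ≤ ∫ ω, (g ω - (1 / (M : ℝ)) * ∑ ℓ, f ℓ ω) ^ 2 ∂P
    ∧ ∫ ω, (g ω - (1 / (M : ℝ)) * ∑ ℓ, f ℓ ω) ^ 2 ∂P
      ≤ (1 / (M : ℝ)) * ∑ ℓ, ∫ ω, (g ω - f ℓ ω) ^ 2 ∂P := by
  have hpair : ∀ i j, (fun ω => (g ω - (f i ω + f j ω) / 2) ^ 2)
      = fun ω => (((g ω - f i ω) + (g ω - f j ω)) / 2) ^ 2 := fun i j => by
    funext ω; ring
  have hmean : ∫ ω, (g ω - (1 / (M : ℝ)) * ∑ ℓ, f ℓ ω) ^ 2 ∂P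
      = (∫ ω, (∑ ℓ, (g ω - f ℓ ω)) ^ 2 ∂P) / (M : ℝ) ^ 2 := by
    rw [← integral_div]
    congr 1 with ω
    simp only [sum_sub_distrib, sum_const, card_univ, Fintype.card_fin, nsmul_eq_mul]
    field_simp
  simp only [hpair, sum_sum_ne_integral_sq_half_add hL2, hmean, Fintype.card_fin]
  exact ensemble_sandwich_of_le_mul (by exact_mod_cast hM) (by
    simpa only [Fintype.card_fin] using integral_sq_sum_le_card_mul_sum_integral_sq hL2)

/-- Convexity sandwich for the ensemble risk: the average `2`-ensemble risk `a₂` is at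
most the average `1`-ensemble risk `a₁`, and `2 a₂ - a₁ ≤ R_M ≤ a₁`. -/
theorem ensemble_risk_sandwich
    {Ω : Type*} [MeasurableSpace Ω] (P : Measure Ω) [IsProbabilityMeasure P]
    (g : Ω → ℝ) (hg : Measurable g)
    (M : ℕ) (hM : 2 ≤ M)
    (f : Fin M → Ω → ℝ) (hf : ∀ ℓ, Measurable (f ℓ))
    (hL2 : ∀ ℓ, MemLp (fun ω => g ω - f ℓ ω) 2 P) :
    ((1 / ((M : ℝ) * ((M : ℝ) - 1))) *
        ∑ i, ∑ j ∈ Finset.univ.filter (fun j => j ≠ i),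
          ∫ ω, (g ω - (f i ω + f j ω) / 2) ^ 2 ∂P)
      ≤ (1 / (M : ℝ)) * ∑ ℓ, ∫ ω, (g ω - f ℓ ω) ^ 2 ∂P
    ∧ 2 * ((1 / ((M : ℝ) * ((M : ℝ) - 1))) *
            ∑ i, ∑ j ∈ Finset.univ.filter (fun j => j ≠ i),
              ∫ ω, (g ω - (f i ω + f j ω) / 2) ^ 2 ∂P)
        - (1 / (M : ℝ)) * ∑ ℓ, ∫ ω, (g ω - f ℓ ω) ^ 2 ∂P
      ≤ ∫ ω, (g ω - (1 / (M : ℝ)) * ∑ ℓ, f ℓ ω) ^ 2 ∂P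
    ∧ ∫ ω, (g ω - (1 / (M : ℝ)) * ∑ ℓ, f ℓ ω) ^ 2 ∂P
      ≤ (1 / (M : ℝ)) * ∑ ℓ, ∫ ω, (g ω - f ℓ ω) ^ 2 ∂P :=
  ensemble_risk_sandwich_general P g M hM f hL2
end

section
/- Let P be a probability measure on a measurable space Ω, let g : Ω → ℝ be measurable, let M ≥ 2, and let f_1, …, f_M : Ω → ℝ be measurable functions such that g − f_ℓ is square-integrable with respect to P for every ℓ. Suppose there are real numbers 𝔯_1, 𝔯_2 and ε_1, ε_2 ≥ 0 such that |∫ (g − f_ℓ)² dP − 𝔯_1| ≤ ε_1 for every ℓ ∈ [M], and |∫ (g − (f_i + f_j)/2)² dP − 𝔯_2| ≤ ε_2 for all i ≠ j in [M]. Then the ensemble risk R_M = ∫ (g − (1/M) Σ_{ℓ=1}^M f_ℓ)² dP satisfies |R_M − ( −(1 − 2/M) 𝔯_1 + 2(1 − 1/M) 𝔯_2 )| ≤ ε_1 + 2 ε_2. -/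
/-! With `e ℓ = g - f ℓ`, the identity
`(∑ e ℓ)² = (2 - M) ∑ (e ℓ)² + 2 ∑_{i ≠ j} ((e i + e j) / 2)²`
writes the `M`-ensemble risk as `-(1 - 2/M)` times the mean `1`-ensemble risk plus `2 (1 - 1/M)`
times the mean `2`-ensemble risk over ordered pairs. Replacing these means by `𝔯₁` and `𝔯₂` costs
at most `(1 - 2/M) ε₁ + 2 (1 - 1/M) ε₂`. -/

open Finset MeasureTheory

theorem Finset.abs_sum_sub_card_mul_le {ι R : Type*} [Ring R] [LinearOrder R] [IsOrderedRing R]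
    {s : Finset ι} {a : ι → R} {r ε : R}
    (h : ∀ i ∈ s, |a i - r| ≤ ε) : |∑ i ∈ s, a i - #s * r| ≤ #s * ε := by
  rw [← nsmul_eq_mul, ← sum_const, ← sum_sub_distrib, ← nsmul_eq_mul]
  exact (abs_sum_le_sum_abs _ _).trans (sum_le_card_nsmul _ _ _ h)

theorem sq_sum_eq_extrapolation {ι K : Type*} [Fintype ι] [DecidableEq ι] [Field K]
    [NeZero (2 : K)] (e : ι → K) :
    (∑ i, e i) ^ 2 = (2 - Fintype.card ι) * ∑ i, e i ^ 2
      + 2 * ∑ i, ∑ j ∈ univ.erase i, ((e i + e j) / 2) ^ 2 := by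
  simp only [sum_erase_eq_sub (mem_univ _), div_pow, add_sq, ← sum_div, sum_sub_distrib,
    sum_add_distrib, ← mul_sum, ← sum_mul, sum_const, card_univ, nsmul_eq_mul]
  field_simp
  rw [← mul_sum]
  ring

theorem integral_sq_sum_eq_extrapolation {Ω ι : Type*} [MeasurableSpace Ω] {μ : Measure Ω}
    [Fintype ι] [DecidableEq ι] {e : ι → Ω → ℝ} (he : ∀ i, MemLp (e i) 2 μ) :
    ∫ ω, (∑ i, e i ω) ^ 2 ∂μ = (2 - Fintype.card ι) * ∑ i, ∫ ω, e i ω ^ 2 ∂μ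
      + 2 * ∑ i, ∑ j ∈ univ.erase i, ∫ ω, ((e i ω + e j ω) / 2) ^ 2 ∂μ := by
  have hsq (i : ι) : Integrable (fun ω => e i ω ^ 2) μ := (he i).integrable_sq
  have hpair (i j : ι) : Integrable (fun ω => ((e i ω + e j ω) / 2) ^ 2) μ :=
    (((he i).add (he j)).integrable_sq.div_const 4).congr
      (ae_of_all _ fun ω => by simp only [Pi.add_apply]; ring)
  have hpairs (i : ι) : Integrable (fun ω => ∑ j ∈ univ.erase i, ((e i ω + e j ω) / 2) ^ 2) μ :=
    integrable_finsetSum _ fun j _ => hpair i j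
  simp_rw [sq_sum_eq_extrapolation]
  rw [integral_add ((integrable_finsetSum _ fun i _ => hsq i).const_mul _)
      ((integrable_finsetSum _ fun i _ => hpairs i).const_mul _),
    integral_const_mul, integral_const_mul, integral_finsetSum _ fun i _ => hsq i,
    integral_finsetSum _ fun i _ => hpairs i]
  simp_rw [integral_finsetSum _ fun j _ => hpair _ j]

theorem abs_extrapolation_sub_le {M S₁ S₂ r₁ r₂ ε₁ ε₂ : ℝ} (hM : 2 ≤ M) (hε₁ : 0 ≤ ε₁)
    (hε₂ : 0 ≤ ε₂) (hS₁ : |S₁ - M * r₁| ≤ M * ε₁)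
    (hS₂ : |S₂ - M * ((M - 1) * r₂)| ≤ M * ((M - 1) * ε₂)) :
    |(1 / M) ^ 2 * ((2 - M) * S₁ + 2 * S₂) - (-(1 - 2 / M) * r₁ + 2 * (1 - 1 / M) * r₂)|
      ≤ ε₁ + 2 * ε₂ := by
  have hM0 : M ≠ 0 := by positivity
  set A := S₁ - M * r₁
  set B := S₂ - M * ((M - 1) * r₂)
  have hdiff : (1 / M) ^ 2 * ((2 - M) * S₁ + 2 * S₂) - (-(1 - 2 / M) * r₁ + 2 * (1 - 1 / M) * r₂)
      = (1 / M) ^ 2 * ((2 - M) * A + 2 * B) := by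
    simp only [A, B]; field_simp; ring
  have hbound : |(2 - M) * A + 2 * B| ≤ M ^ 2 * (ε₁ + 2 * ε₂) :=
    calc |(2 - M) * A + 2 * B| ≤ (M - 2) * |A| + 2 * |B| := by
          grw [abs_add_le, abs_mul, abs_mul, abs_of_nonpos (by linarith : 2 - M ≤ 0), abs_two,
            neg_sub]
      _ ≤ (M - 2) * (M * ε₁) + 2 * (M * ((M - 1) * ε₂)) := by gcongr
      _ ≤ M ^ 2 * (ε₁ + 2 * ε₂) := by nlinarith
  rw [hdiff, abs_mul, abs_of_pos (by positivity)]
  calc (1 / M) ^ 2 * |(2 - M) * A + 2 * B| ≤ (1 / M) ^ 2 * (M ^ 2 * (ε₁ + 2 * ε₂)) := by gcongr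
    _ = ε₁ + 2 * ε₂ := by field_simp

theorem ensemble_risk_extrapolation_stability_general
    {Ω : Type*} [MeasurableSpace Ω] (P : Measure Ω)
    (g : Ω → ℝ)
    (M : ℕ) (hM : 2 ≤ M)
    (f : Fin M → Ω → ℝ)
    (hL2 : ∀ ℓ, MemLp (fun ω => g ω - f ℓ ω) 2 P)
    (𝔯₁ 𝔯₂ ε₁ ε₂ : ℝ) (hε₁ : 0 ≤ ε₁) (hε₂ : 0 ≤ ε₂)
    (h1 : ∀ ℓ : Fin M, |(∫ ω, (g ω - f ℓ ω) ^ 2 ∂P) - 𝔯₁| ≤ ε₁)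
    (h2 : ∀ i j : Fin M, i ≠ j →
      |(∫ ω, (g ω - (f i ω + f j ω) / 2) ^ 2 ∂P) - 𝔯₂| ≤ ε₂) :
    |(∫ ω, (g ω - (1 / (M : ℝ)) * ∑ ℓ, f ℓ ω) ^ 2 ∂P)
        - (-(1 - 2 / (M : ℝ)) * 𝔯₁ + 2 * (1 - 1 / (M : ℝ)) * 𝔯₂)|
      ≤ ε₁ + 2 * ε₂ := by
  have hM0 : (M : ℝ) ≠ 0 := by positivity
  have hrisk (ω : Ω) : (g ω - (1 / (M : ℝ)) * ∑ ℓ, f ℓ ω) ^ 2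
      = (1 / (M : ℝ)) ^ 2 * (∑ ℓ, (g ω - f ℓ ω)) ^ 2 := by
    rw [sum_sub_distrib, sum_const, card_fin, nsmul_eq_mul]; field_simp
  have hpair (i j : Fin M) (ω : Ω) :
      ((g ω - f i ω) + (g ω - f j ω)) / 2 = g ω - (f i ω + f j ω) / 2 := by ring
  have hcard (i : Fin M) : ((univ.erase i).card : ℝ) = M - 1 := by
    rw [card_erase_of_mem (mem_univ i), card_fin, Nat.cast_sub (by omega), Nat.cast_one]
  simp_rw [hrisk, integral_const_mul, integral_sq_sum_eq_extrapolation hL2, Fintype.card_fin,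
    hpair]
  refine abs_extrapolation_sub_le (by exact_mod_cast hM) hε₁ hε₂ ?_ ?_
  · simpa using abs_sum_sub_card_mul_le (s := univ) fun ℓ _ => h1 ℓ
  · have hrow (i : Fin M) := hcard i ▸ abs_sum_sub_card_mul_le (s := univ.erase i)
      fun j hj => h2 i j (ne_of_mem_erase hj).symm
    simpa using abs_sum_sub_card_mul_le (s := univ) fun i _ => hrow i

/-- Deterministic stability bound: if every `1`-ensemble risk is within `ε₁` of `𝔯₁`
and every `2`-ensemble risk is within `ε₂` of `𝔯₂`, then the `M`-ensemble risk is
within `ε₁ + 2 ε₂` of the extrapolated value `-(1 - 2/M) 𝔯₁ + 2 (1 - 1/M) 𝔯₂`. -/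
theorem ensemble_risk_extrapolation_stability
    {Ω : Type*} [MeasurableSpace Ω] (P : Measure Ω) [IsProbabilityMeasure P]
    (g : Ω → ℝ) (hg : Measurable g)
    (M : ℕ) (hM : 2 ≤ M)
    (f : Fin M → Ω → ℝ) (hf : ∀ ℓ, Measurable (f ℓ))
    (hL2 : ∀ ℓ, MemLp (fun ω => g ω - f ℓ ω) 2 P)
    (𝔯₁ 𝔯₂ ε₁ ε₂ : ℝ) (hε₁ : 0 ≤ ε₁) (hε₂ : 0 ≤ ε₂)
    (h1 : ∀ ℓ : Fin M, |(∫ ω, (g ω - f ℓ ω) ^ 2 ∂P) - 𝔯₁| ≤ ε₁)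
    (h2 : ∀ i j : Fin M, i ≠ j →
      |(∫ ω, (g ω - (f i ω + f j ω) / 2) ^ 2 ∂P) - 𝔯₂| ≤ ε₂) :
    |(∫ ω, (g ω - (1 / (M : ℝ)) * ∑ ℓ, f ℓ ω) ^ 2 ∂P)
        - (-(1 - 2 / (M : ℝ)) * 𝔯₁ + 2 * (1 - 1 / (M : ℝ)) * 𝔯₂)|
      ≤ ε₁ + 2 * ε₂ :=
  ensemble_risk_extrapolation_stability_general P g M hM f hL2 𝔯₁ 𝔯₂ ε₁ ε₂ hε₁ hε₂ h1 h2
end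

section
/- Let (Z_ℓ)_{ℓ≥1} be independent and identically distributed random variables with values in a measurable space E on a probability space, and let h : E × E → ℝ be a measurable function such that h(Z_1, Z_2) is integrable. For M ≥ 2 define the order-2 U-statistic U_M = (1/(M(M−1))) Σ_{i≠j, i,j∈[M]} h(Z_i, Z_j), where the sum ranges over all ordered pairs (i,j) with i ≠ j. Then for every δ > 0, ℙ( sup_{M ≥ 2} |U_M| ≥ δ ) ≤ E|h(Z_1, Z_2)| / δ. -/
/-!
`U_M` is the average of `h` over ordered pairs of distinct indices in `[M]`, so it is symmetric in
`Z_1, …, Z_M`. Fix a horizon `N` and let `A_k` be the event that `k` is the last index `≤ N`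
with `|U_k| ≥ c`. Since `A_k` only involves `U_l` for `l ≥ k`, it is invariant under permutations
of the first `k` coordinates, and exchangeability of the i.i.d. sequence gives
`E[|h(Z_i, Z_j)|; A_k] = E[|h(Z_1, Z_2)|; A_k]` for all `i ≠ j ≤ k`. Averaging,
`c ℙ(A_k) ≤ E[|U_k|; A_k] ≤ E[|h(Z_1, Z_2)|; A_k]`, and summing over the disjoint `A_k` bounds
`c ℙ(max_{k ≤ N} |U_k| ≥ c)` by `E|h(Z_1, Z_2)|`. Let `N → ∞` and `c ↑ δ`.
-/

open Finset MeasureTheory ProbabilityTheory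
open scoped ENNReal

theorem Finset.sum_sum_filter_ne_eq_sum_offDiag {α M : Type*} [DecidableEq α] [AddCommMonoid M]
    (s : Finset α) (f : α → α → M) :
    ∑ i ∈ s, ∑ j ∈ s.filter (fun j => j ≠ i), f i j = ∑ p ∈ s.offDiag, f p.1 p.2 := by
  rw [← Finset.sum_finset_product' (s.offDiag) _ _ (by simp [ne_comm])]

theorem Equiv.Perm.apply_lt_iff_of_forall_le_apply_eq {σ : Equiv.Perm ℕ} {m : ℕ}
    (hσ : ∀ i, m ≤ i → σ i = i) (i : ℕ) : σ i < m ↔ i < m := by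
  refine ⟨fun hσi => ?_, fun hi => ?_⟩
  · by_contra! hmi
    rw [hσ i hmi] at hσi
    omega
  · by_contra! hmσ
    have := σ.injective (hσ _ hmσ)
    omega

theorem Equiv.Perm.exists_apply_zero_apply_one {m i j : ℕ} (hi : i < m) (hj : j < m)
    (hij : i ≠ j) : ∃ σ : Equiv.Perm ℕ, σ 0 = i ∧ σ 1 = j ∧ ∀ k, m ≤ k → σ k = k := by
  set τ := Equiv.swap 0 i
  refine ⟨τ * Equiv.swap 1 (τ j), ?_, ?_, fun k hk => ?_⟩
  · have h0 : 0 ≠ τ j := fun h => hij (by simpa [τ] using congrArg τ h)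
    simp [Equiv.swap_apply_of_ne_of_ne (zero_ne_one) h0, τ]
  · simp [τ]
  · have hτj : τ j < m := by
      unfold τ; rw [Equiv.swap_apply_def]; split_ifs <;> omega
    rw [Equiv.Perm.mul_apply, Equiv.swap_apply_of_ne_of_ne (a := 1) (by omega) (by omega),
      Equiv.swap_apply_of_ne_of_ne (by omega) (by omega)]

section UStatistic

variable {E : Type*}

-- `uStat h n x` is the order-2 U-statistic `U_{n+2}` of the first `n + 2` terms of `x`.
noncomputable def uStat (h : E × E → ℝ) (n : ℕ) (x : ℕ → E) : ℝ :=
  (1 / (((n : ℝ) + 2) * ((n : ℝ) + 1))) *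
    ∑ i ∈ range (n + 2), ∑ j ∈ (range (n + 2)).filter (fun j => j ≠ i), h (x i, x j)

theorem uStat_eq_offDiag (h : E × E → ℝ) (n : ℕ) (x : ℕ → E) :
    uStat h n x = ((range (n + 2)).offDiag.card : ℝ)⁻¹ *
      ∑ p ∈ (range (n + 2)).offDiag, h (x p.1, x p.2) := by
  have hcard : (range (n + 2)).offDiag.card = (n + 2) * (n + 1) := by
    rw [Finset.offDiag_card, card_range, ← Nat.mul_sub_one]
    rfl
  rw [uStat, Finset.sum_sum_filter_ne_eq_sum_offDiag, hcard, one_div]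
  push_cast
  ring

theorem uStat_comp_perm (h : E × E → ℝ) {n : ℕ} {σ : Equiv.Perm ℕ}
    (hσ : ∀ i, n + 2 ≤ i → σ i = i) (x : ℕ → E) : uStat h n (x ∘ σ) = uStat h n x := by
  simp only [uStat_eq_offDiag, Function.comp_apply]
  congr 1
  refine Finset.sum_equiv (σ.prodCongr σ) (fun p => ?_) fun _ _ => rfl
  simp only [mem_offDiag, mem_range, Equiv.prodCongr_apply, Prod.map_fst, Prod.map_snd,
    σ.apply_lt_iff_of_forall_le_apply_eq hσ, σ.injective.ne_iff]

theorem card_offDiag_range_add_two_pos (n : ℕ) : 0 < (range (n + 2)).offDiag.card :=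
  card_pos.mpr ⟨(0, 1), by simp⟩

theorem ofReal_abs_uStat_le (h : E × E → ℝ) (n : ℕ) (x : ℕ → E) :
    ENNReal.ofReal |uStat h n x| ≤ ((range (n + 2)).offDiag.card : ℝ≥0∞)⁻¹ *
      ∑ p ∈ (range (n + 2)).offDiag, ENNReal.ofReal |h (x p.1, x p.2)| := by
  rw [uStat_eq_offDiag, abs_mul, abs_inv, Nat.abs_cast,
    ← ENNReal.ofReal_sum_of_nonneg fun _ _ => abs_nonneg _, ← ENNReal.ofReal_natCast,
    ← ENNReal.ofReal_inv_of_pos (by exact_mod_cast card_offDiag_range_add_two_pos n),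
    ← ENNReal.ofReal_mul (by positivity)]
  gcongr
  exact abs_sum_le_sum_abs _ _

theorem measurable_uStat [MeasurableSpace E] {h : E × E → ℝ} (hh : Measurable h) (n : ℕ) :
    Measurable (uStat h n) := by
  unfold uStat
  fun_prop

-- The event that `k` is the last index `≤ N` with `c ≤ |U_{k+2}|`: a reversed-time stopping time.
def lastExceedance (h : E × E → ℝ) (c : ℝ) (N k : ℕ) : Set (ℕ → E) :=
  {x | c ≤ |uStat h k x| ∧ ∀ l, k < l → l ≤ N → |uStat h l x| < c}

theorem measurableSet_lastExceedance [MeasurableSpace E] {h : E × E → ℝ} (hh : Measurable h)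
    (c : ℝ) (N k : ℕ) :
    MeasurableSet (lastExceedance h c N k) := by
  have hU := measurable_uStat hh
  refine (measurableSet_le measurable_const (hU k).abs).inter ?_
  exact measurableSet_setOfPred.mpr <| .forall fun l => measurable_const.imp <|
    measurable_const.imp <| measurableSet_setOfPred.mp <|
      measurableSet_lt (hU l).abs measurable_const

theorem preimage_comp_perm_lastExceedance (h : E × E → ℝ) (c : ℝ) (N : ℕ) {k : ℕ}
    {σ : Equiv.Perm ℕ} (hσ : ∀ i, k + 2 ≤ i → σ i = i) :
    (fun x => x ∘ σ) ⁻¹' lastExceedance h c N k = lastExceedance h c N k := by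
  have hU : ∀ l, k ≤ l → ∀ x : ℕ → E, uStat h l (x ∘ σ) = uStat h l x :=
    fun l hkl => uStat_comp_perm h fun i hi => hσ i (by omega)
  ext x
  simp only [lastExceedance, Set.preimage_ofPred_eq, Set.mem_ofPred_eq, hU k le_rfl]
  exact and_congr_right' <| forall_congr' fun l => imp_congr_right fun hkl => by
    rw [hU l hkl.le]

theorem pairwiseDisjoint_lastExceedance (h : E × E → ℝ) (c : ℝ) (N : ℕ) :
    (range (N + 1) : Set ℕ).PairwiseDisjoint (lastExceedance h c N) := by
  have hlt : ∀ k l, k < l → l ≤ N → Disjoint (lastExceedance h c N k) (lastExceedance h c N l) :=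
    fun k l hkl hlN => Set.disjoint_left.mpr fun x hk hl => (hk.2 l hkl hlN).not_ge hl.1
  intro k hk l hl hkl
  simp only [coe_range, Set.mem_Iio] at hk hl
  rcases hkl.lt_or_gt with hkl | hlk
  · exact hlt k l hkl (by omega)
  · exact (hlt l k hlk (by omega)).symm

theorem biUnion_lastExceedance (h : E × E → ℝ) (c : ℝ) (N : ℕ) :
    ⋃ k ∈ range (N + 1), lastExceedance h c N k = {x | ∃ k ≤ N, c ≤ |uStat h k x|} := by
  ext x
  simp only [Set.mem_iUnion, mem_range, Set.mem_ofPred_eq, exists_prop, Nat.lt_succ_iff]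
  refine ⟨fun ⟨k, hkN, hk⟩ => ⟨k, hkN, hk.1⟩, fun ⟨k, hkN, hk⟩ => ?_⟩
  exact ⟨Nat.findGreatest (fun l => c ≤ |uStat h l x|) N, Nat.findGreatest_le N,
    Nat.findGreatest_spec (P := fun l => c ≤ |uStat h l x|) hkN hk,
    fun l hKl hlN => not_le.mp (Nat.findGreatest_is_greatest hKl hlN)⟩

end UStatistic

section Exchangeable

variable {E : Type*} [MeasurableSpace E] {ν : Measure (ℕ → E)} {h : E × E → ℝ}

theorem setLIntegral_abs_uStat_le
    (hν : ∀ σ : Equiv.Perm ℕ, MeasurePreserving (fun x : ℕ → E => x ∘ σ) ν ν)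
    (hh : Measurable h) {n : ℕ} {A : Set (ℕ → E)} (hA : MeasurableSet A)
    (hAσ : ∀ σ : Equiv.Perm ℕ, (∀ i, n + 2 ≤ i → σ i = i) → (fun x => x ∘ σ) ⁻¹' A = A) :
    ∫⁻ x in A, ENNReal.ofReal |uStat h n x| ∂ν ≤
      ∫⁻ x in A, ENNReal.ofReal |h (x 0, x 1)| ∂ν := by
  set D := (range (n + 2)).offDiag
  have hpair : ∀ p ∈ D, ∫⁻ x in A, ENNReal.ofReal |h (x p.1, x p.2)| ∂ν =
      ∫⁻ x in A, ENNReal.ofReal |h (x 0, x 1)| ∂ν := by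
    intro p hp
    obtain ⟨hp1, hp2, hp12⟩ := mem_offDiag.mp hp
    obtain ⟨σ, hσ0, hσ1, hσ⟩ :=
      Equiv.Perm.exists_apply_zero_apply_one (mem_range.mp hp1) (mem_range.mp hp2) hp12
    rw [← (hν σ).setLIntegral_comp_preimage hA
      (f := fun x => ENNReal.ofReal |h (x 0, x 1)|) (by fun_prop), hAσ σ hσ]
    simp only [Function.comp_apply, hσ0, hσ1]
  calc ∫⁻ x in A, ENNReal.ofReal |uStat h n x| ∂ν
      ≤ ∫⁻ x in A, (D.card : ℝ≥0∞)⁻¹ * ∑ p ∈ D, ENNReal.ofReal |h (x p.1, x p.2)| ∂ν :=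
        lintegral_mono fun x => ofReal_abs_uStat_le h n x
    _ = (D.card : ℝ≥0∞)⁻¹ * ∑ p ∈ D, ∫⁻ x in A, ENNReal.ofReal |h (x p.1, x p.2)| ∂ν := by
        rw [lintegral_const_mul _ (by fun_prop), lintegral_finsetSum _ fun _ _ => by fun_prop]
    _ = ∫⁻ x in A, ENNReal.ofReal |h (x 0, x 1)| ∂ν := by
        rw [sum_congr rfl hpair, sum_const, nsmul_eq_mul,
          ENNReal.inv_mul_cancel_left (by exact_mod_cast (card_offDiag_range_add_two_pos n).ne')
            (ENNReal.natCast_ne_top _)]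

theorem ofReal_mul_measure_exists_le_abs_uStat_le
    (hν : ∀ σ : Equiv.Perm ℕ, MeasurePreserving (fun x : ℕ → E => x ∘ σ) ν ν)
    (hh : Measurable h) (c : ℝ) (N : ℕ) :
    ENNReal.ofReal c * ν {x | ∃ k ≤ N, c ≤ |uStat h k x|} ≤
      ∫⁻ x, ENNReal.ofReal |h (x 0, x 1)| ∂ν := by
  have hA := measurableSet_lastExceedance hh c N
  have hdisj := pairwiseDisjoint_lastExceedance h c N
  calc ENNReal.ofReal c * ν {x | ∃ k ≤ N, c ≤ |uStat h k x|}
      = ∑ k ∈ range (N + 1), ∫⁻ _ in lastExceedance h c N k, ENNReal.ofReal c ∂ν := by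
        simp only [← biUnion_lastExceedance h c N, measure_biUnion_finset hdisj fun k _ => hA k,
          mul_sum, setLIntegral_const]
    _ ≤ ∑ k ∈ range (N + 1), ∫⁻ x in lastExceedance h c N k, ENNReal.ofReal |uStat h k x| ∂ν :=
        sum_le_sum fun k _ => setLIntegral_mono (measurable_uStat hh k).abs.ennreal_ofReal
          fun x hx => ENNReal.ofReal_le_ofReal hx.1
    _ ≤ ∑ k ∈ range (N + 1), ∫⁻ x in lastExceedance h c N k, ENNReal.ofReal |h (x 0, x 1)| ∂ν :=
        sum_le_sum fun k _ => setLIntegral_abs_uStat_le hν hh (hA k)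
          fun _ hσ => preimage_comp_perm_lastExceedance h c N hσ
    _ = ∫⁻ x in ⋃ k ∈ range (N + 1), lastExceedance h c N k, ENNReal.ofReal |h (x 0, x 1)| ∂ν :=
        (lintegral_biUnion_finset hdisj (fun k _ => hA k) _).symm
    _ ≤ ∫⁻ x, ENNReal.ofReal |h (x 0, x 1)| ∂ν := setLIntegral_le_lintegral _ _

theorem ofReal_mul_measure_le_iSup_abs_uStat_le
    (hν : ∀ σ : Equiv.Perm ℕ, MeasurePreserving (fun x : ℕ → E => x ∘ σ) ν ν)
    (hh : Measurable h) (δ : ℝ) :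
    ENNReal.ofReal δ * ν {x | ENNReal.ofReal δ ≤ ⨆ M : ℕ, ENNReal.ofReal |uStat h M x|} ≤
      ∫⁻ x, ENNReal.ofReal |h (x 0, x 1)| ∂ν := by
  refine ENNReal.mul_le_of_forall_lt fun a ha b hb => ?_
  set c := a.toReal
  have hac : a = ENNReal.ofReal c := (ENNReal.ofReal_toReal ha.ne_top).symm
  have hmono : Monotone fun N => {x | ∃ k ≤ N, c ≤ |uStat h k x|} :=
    fun N N' hN x ⟨k, hk, hck⟩ => ⟨k, hk.trans hN, hck⟩
  have hsub : {x | ENNReal.ofReal δ ≤ ⨆ M : ℕ, ENNReal.ofReal |uStat h M x|} ⊆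
      ⋃ N, {x | ∃ k ≤ N, c ≤ |uStat h k x|} := by
    intro x hx
    obtain ⟨M, hM⟩ := lt_iSup_iff.mp (hac ▸ ha.trans_le hx)
    exact Set.mem_iUnion.mpr ⟨M, M, le_rfl,
      ((ENNReal.ofReal_lt_ofReal_iff'.mp hM).1).le⟩
  calc a * b ≤ ENNReal.ofReal c * ν (⋃ N, {x | ∃ k ≤ N, c ≤ |uStat h k x|}) := by
        rw [← hac]; gcongr; exact hb.le.trans (measure_mono hsub)
    _ = ⨆ N, ENNReal.ofReal c * ν {x | ∃ k ≤ N, c ≤ |uStat h k x|} := by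
        rw [hmono.measure_iUnion, ENNReal.mul_iSup]
    _ ≤ ∫⁻ x, ENNReal.ofReal |h (x 0, x 1)| ∂ν :=
        iSup_le fun N => ofReal_mul_measure_exists_le_abs_uStat_le hν hh c N

end Exchangeable

theorem ProbabilityTheory.iIndepFun.measurePreserving_comp_perm {Ω E : Type*}
    [MeasurableSpace Ω] [MeasurableSpace E] {P : Measure Ω} [IsProbabilityMeasure P]
    {Z : ℕ → Ω → E} (hindep : iIndepFun Z P) (hmeas : ∀ i, Measurable (Z i))
    (hident : ∀ i, IdentDistrib (Z i) (Z 0) P P) (σ : Equiv.Perm ℕ) :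
    MeasurePreserving (fun x : ℕ → E => x ∘ σ) (P.map fun ω i => Z i ω)
      (P.map fun ω i => Z i ω) := by
  have hlaw : P.map (fun ω i => Z i ω) = Measure.infinitePi fun _ => P.map (Z 0) := by
    simp only [hindep.map_fun_eq_infinitePi_map hmeas, fun i => (hident i).map_eq]
  have : IsProbabilityMeasure (P.map (Z 0)) :=
    Measure.isProbabilityMeasure_map (hmeas 0).aemeasurable
  have hperm : ⇑(MeasurableEquiv.piCongrLeft (fun _ => E) σ.symm) = fun x => x ∘ σ := by
    funext x i
    simp [MeasurableEquiv.coe_piCongrLeft, Equiv.piCongrLeft_apply]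
  rw [hlaw]
  exact ⟨by fun_prop, hperm ▸ Measure.infinitePi_map_piCongrLeft (fun _ => P.map (Z 0)) σ.symm⟩

/-- Maximal inequality for order-2 U-statistics of an i.i.d. sequence:
`ℙ(sup_{M ≥ 2} |U_M| ≥ δ) ≤ E|h(Z_1, Z_2)| / δ`, where
`U_M = (1/(M(M-1))) ∑_{i ≠ j, i,j ∈ [M]} h(Z_i, Z_j)` (sum over ordered pairs).
Here the sequence is indexed from `0`, so `U_{M+2}` (for `M : ℕ`) realizes the
supremum over all ensemble sizes `≥ 2`, and `(Z_0, Z_1)` plays the role of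
`(Z_1, Z_2)`. -/
theorem maximal_inequality_order_two_U_statistic
    {Ω E : Type*} [MeasurableSpace Ω] [MeasurableSpace E]
    (P : Measure Ω) [IsProbabilityMeasure P]
    (Z : ℕ → Ω → E) (hmeas : ∀ i, Measurable (Z i))
    (hindep : iIndepFun Z P)
    (hident : ∀ i, IdentDistrib (Z i) (Z 0) P P)
    (h : E × E → ℝ) (hh : Measurable h)
    (hint : Integrable (fun ω => h (Z 0 ω, Z 1 ω)) P)
    (δ : ℝ) (hδ : 0 < δ) :
    P {ω | ENNReal.ofReal δ ≤
        ⨆ M : ℕ, ENNReal.ofReal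
          |(1 / (((M : ℝ) + 2) * ((M : ℝ) + 1))) *
            ∑ i ∈ Finset.range (M + 2),
              ∑ j ∈ (Finset.range (M + 2)).filter (fun j => j ≠ i),
                h (Z i ω, Z j ω)|}
      ≤ ENNReal.ofReal ((∫ ω, |h (Z 0 ω, Z 1 ω)| ∂P) / δ) := by
  set X : Ω → ℕ → E := fun ω i => Z i ω
  have hX : Measurable X := measurable_pi_lambda _ hmeas
  have hmoment : ∫⁻ x, ENNReal.ofReal |h (x 0, x 1)| ∂(P.map X) =
      ENNReal.ofReal (∫ ω, |h (Z 0 ω, Z 1 ω)| ∂P) := by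
    rw [lintegral_map (by fun_prop) hX, ofReal_integral_eq_lintegral_ofReal hint.abs
      (.of_forall fun _ => abs_nonneg _)]
  rw [ENNReal.ofReal_div_of_pos hδ, ENNReal.le_div_iff_mul_le (.inl (by positivity))
    (.inl ENNReal.ofReal_ne_top), mul_comm, ← hmoment]
  calc ENNReal.ofReal δ *
        P (X ⁻¹' {x | ENNReal.ofReal δ ≤ ⨆ M : ℕ, ENNReal.ofReal |uStat h M x|})
      ≤ ENNReal.ofReal δ *
        P.map X {x | ENNReal.ofReal δ ≤ ⨆ M : ℕ, ENNReal.ofReal |uStat h M x|} := by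
        gcongr; exact Measure.le_map_apply hX.aemeasurable _
    _ ≤ _ := ofReal_mul_measure_le_iSup_abs_uStat_le
        (hindep.measurePreserving_comp_perm hmeas hident) hh δ
end

section
/- Let K be a nonempty finite set, and let ζ ≥ 0 and δ > 0 be real numbers. Let b : K → ℝ and c : K → ℝ with c(k) ≥ 0 for all k ∈ K, and define the extrapolated risk estimate R̂ : {M ∈ ℕ : M ≥ 1} × K → ℝ by R̂(M, k) = b(k) + c(k)/M. Let R : {M ∈ ℕ : M ≥ 1} × K → ℝ be such that |R̂(M, k) − R(M, k)| ≤ ζ for all M ≥ 1 and k ∈ K. Suppose k̂ ∈ K minimizes b over K, and M̂ ≥ 1 satisfies c(k̂)/M̂ ≤ δ. Then R is bounded below, and R(M̂, k̂) ≤ inf_{M ≥ 1, k ∈ K} R(M, k) + δ + 2ζ. -/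
/-!
The selected pair `(M̂, k̂)` minimises the extrapolated estimate `R̂(M, k) = b(k) + c(k)/M` up to
`δ`: `R̂(M̂, k̂) ≤ b(k̂) + δ` and `b(k̂) ≤ b(k) ≤ R̂(M, k)` because `c ≥ 0`. A `δ`-minimiser of a
function that is uniformly `ζ`-close to `R` is a `(δ + 2ζ)`-minimiser of `R`, since passing from
`R` to the estimate and back costs `ζ` each way.
-/

open Set

theorem bddBelow_range_and_le_ciInf_add_of_abs_sub_le {ι : Type*} {f g : ι → ℝ} {ε ζ : ℝ}
    (hfg : ∀ i, |g i - f i| ≤ ζ) (i₀ : ι) (hi₀ : ∀ i, g i₀ ≤ g i + ε) :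
    BddBelow (range f) ∧ f i₀ ≤ (⨅ i, f i) + ε + 2 * ζ := by
  have hlower : ∀ i, g i₀ - ε - ζ ≤ f i := fun i => by
    linarith [hi₀ i, (abs_le.mp (hfg i)).2]
  have : Nonempty ι := ⟨i₀⟩
  have hinf : g i₀ - ε - ζ ≤ ⨅ i, f i := le_ciInf hlower
  refine ⟨⟨g i₀ - ε - ζ, forall_mem_range.mpr hlower⟩, ?_⟩
  linarith [(abs_le.mp (hfg i₀)).1]

theorem add_div_le_add_div_add_of_le {K : Type*} {b c : K → ℝ} {δ : ℝ}
    (hc : ∀ k, 0 ≤ c k) {khat : K} (hkhat : ∀ k, b khat ≤ b k)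
    {Mhat : ℕ} (hMδ : c khat / (Mhat : ℝ) ≤ δ) (M : ℕ) (k : K) :
    b khat + c khat / (Mhat : ℝ) ≤ b k + c k / (M : ℝ) + δ := by
  have hgap : 0 ≤ c k / (M : ℝ) := div_nonneg (hc k) M.cast_nonneg
  linarith [hkhat k]

theorem ecv_additive_delta_optimality_general
    {K : Type*}
    (ζ δ : ℝ)
    (b c : K → ℝ) (hc : ∀ k, 0 ≤ c k)
    (R : ℕ → K → ℝ)
    (happrox : ∀ M : ℕ, 1 ≤ M → ∀ k : K, |(b k + c k / (M : ℝ)) - R M k| ≤ ζ)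
    (khat : K) (hkhat : ∀ k, b khat ≤ b k)
    (Mhat : ℕ) (hMhat : 1 ≤ Mhat) (hMδ : c khat / (Mhat : ℝ) ≤ δ) :
    BddBelow (Set.range fun q : {M : ℕ // 1 ≤ M} × K => R q.1.1 q.2) ∧
    R Mhat khat ≤ (⨅ q : {M : ℕ // 1 ≤ M} × K, R q.1.1 q.2) + δ + 2 * ζ :=
  bddBelow_range_and_le_ciInf_add_of_abs_sub_le
    (g := fun q : {M : ℕ // 1 ≤ M} × K => b q.2 + c q.2 / (q.1.1 : ℝ))
    (fun q => happrox q.1.1 q.1.2 q.2) (⟨Mhat, hMhat⟩, khat)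
    (fun q => add_div_le_add_div_add_of_le hc hkhat hMδ q.1.1 q.2)

/-- Deterministic core of the δ-optimality guarantee of ECV: if the extrapolated
risk estimates `R̂(M, k) = b(k) + c(k)/M` are uniformly within `ζ` of the true risks
`R(M, k)`, `k̂` minimizes `b`, and `c(k̂)/M̂ ≤ δ`, then `R` is bounded below and the
selected ensemble's risk exceeds the oracle optimum by at most `δ + 2ζ`. -/
theorem ecv_additive_delta_optimality
    {K : Type*} [Fintype K] [Nonempty K]
    (ζ δ : ℝ) (hζ : 0 ≤ ζ) (hδ : 0 < δ)
    (b c : K → ℝ) (hc : ∀ k, 0 ≤ c k)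
    (R : ℕ → K → ℝ)
    (happrox : ∀ M : ℕ, 1 ≤ M → ∀ k : K, |(b k + c k / (M : ℝ)) - R M k| ≤ ζ)
    (khat : K) (hkhat : ∀ k, b khat ≤ b k)
    (Mhat : ℕ) (hMhat : 1 ≤ Mhat) (hMδ : c khat / (Mhat : ℝ) ≤ δ) :
    BddBelow (Set.range fun q : {M : ℕ // 1 ≤ M} × K => R q.1.1 q.2) ∧
    R Mhat khat ≤ (⨅ q : {M : ℕ // 1 ≤ M} × K, R q.1.1 q.2) + δ + 2 * ζ :=
  ecv_additive_delta_optimality_general ζ δ b c hc R happrox khat hkhat Mhat hMhat hMδ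
end
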